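/- Let u : ℝ × ℝⁿ → ℝ be a smooth solution of the PDE ∂u/∂t = Δu + P(u) with admissible decay, and suppose u is periodic in time: there is T₀ > 0 with u(t + T₀, x) = u(t, x) for all (t, x). Then u is constant in t, i.e. ∂u/∂t ≡ 0; equivalently, there are no nonconstant time-periodic solutions of the PDE with admissible decay. -/

import Mathlib

open MeasureTheory Filter Topology
open scoped ENNReal

noncomputable section

/-- Euclidean space `ℝⁿ`. -/
abbrev Spc (n : ℕ) := EuclideanSpace ℝ (Fin n)

/-- The Laplacian in the spatial variables. -/
noncomputable def lap {n : ℕ} (f : Spc n → ℝ) (x : Spc n) : ℝ :=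
  ∑ i : Fin n, fderiv ℝ (fun y => fderiv ℝ f y (EuclideanSpace.single i 1)) x
    (EuclideanSpace.single i 1)

/-- The polynomial nonlinearity `P(f)(x) = -f(x)^N + ∑_{i<N} aᵢ(x) f(x)^i`. -/
noncomputable def Pfun {n N : ℕ} (a : Fin N → Spc n → ℝ) (f : Spc n → ℝ) (x : Spc n) : ℝ :=
  -(f x) ^ N + ∑ i : Fin N, a i x * f x ^ (i : ℕ)

/-- The time derivative `∂u/∂t`. -/
noncomputable def timeDeriv {n : ℕ} (u : ℝ × Spc n → ℝ) (t : ℝ) (x : Spc n) : ℝ :=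
  deriv (fun s => u (s, x)) t

/-- `u` is a global solution of `∂u/∂t = Δu + P(u)`. -/
def IsSol {n N : ℕ} (a : Fin N → Spc n → ℝ) (u : ℝ × Spc n → ℝ) : Prop :=
  ∀ t x, timeDeriv u t x = lap (fun y => u (t, y)) x + Pfun a (fun y => u (t, y)) x

/-- `w` is an equilibrium: `Δw + P(w) = 0`. -/
def IsEquilibrium {n N : ℕ} (a : Fin N → Spc n → ℝ) (w : Spc n → ℝ) : Prop :=
  ∀ x, lap w x + Pfun a w x = 0

/-- The energy density `|∂u/∂t|² + |Δu + P(u)|²`. -/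
noncomputable def energyDensity {n N : ℕ} (a : Fin N → Spc n → ℝ) (u : ℝ × Spc n → ℝ)
    (t : ℝ) (x : Spc n) : ℝ :=
  (timeDeriv u t x) ^ 2 + (lap (fun y => u (t, y)) x + Pfun a (fun y => u (t, y)) x) ^ 2

/-- The energy `E(u) = (1/2) ∫_ℝ ∫_{ℝⁿ} (|∂u/∂t|² + |Δu + P(u)|²) dx dt`, valued in `ℝ≥0∞`. -/
noncomputable def energy {n N : ℕ} (a : Fin N → Spc n → ℝ) (u : ℝ × Spc n → ℝ) : ℝ≥0∞ :=
  (1 / 2) * ∫⁻ t : ℝ, ∫⁻ x : Spc n, ENNReal.ofReal (energyDensity a u t x)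

/-- The action density `(1/2)|∇f|² + f^{N+1}/(N+1) - ∑_{i<N} aᵢ f^{i+1}/(i+1)`. -/
noncomputable def actionDensity {n N : ℕ} (a : Fin N → Spc n → ℝ) (f : Spc n → ℝ)
    (x : Spc n) : ℝ :=
  (1 / 2) * ‖gradient f x‖ ^ 2 + f x ^ (N + 1) / (N + 1)
    - ∑ i : Fin N, a i x * f x ^ ((i : ℕ) + 1) / ((i : ℕ) + 1)

/-- The action functional `A(f)`. -/
noncomputable def action {n N : ℕ} (a : Fin N → Spc n → ℝ) (f : Spc n → ℝ) : ℝ :=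
  ∫ x : Spc n, actionDensity a f x

/-- `f` has finite action. -/
def FiniteAction {n N : ℕ} (a : Fin N → Spc n → ℝ) (f : Spc n → ℝ) : Prop :=
  Integrable (actionDensity a f)

/-- The coefficients `aᵢ` are smooth, in `L¹ ∩ L∞`, with all derivatives of all orders
bounded. -/
def GoodCoeffs {n N : ℕ} (a : Fin N → Spc n → ℝ) : Prop :=
  ∀ i, ContDiff ℝ (⊤ : ℕ∞) (a i) ∧ Integrable (a i) ∧
    ∀ k : ℕ, ∃ C : ℝ, ∀ x, ‖iteratedFDeriv ℝ k (a i) x‖ ≤ C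

/-- `u`, `∂u/∂t` and the spatial derivatives of `u` up to order two are bounded by a
constant multiple of `(1+|x|)^{-(n+1)}`, uniformly for `t` in compact intervals. -/
def AdmissibleDecay {n : ℕ} (u : ℝ × Spc n → ℝ) : Prop :=
  ∀ T > (0 : ℝ), ∃ C : ℝ, ∀ t : ℝ, ∀ x : Spc n, |t| ≤ T →
    |u (t, x)| ≤ C * (1 + ‖x‖) ^ (-(n + 1 : ℝ)) ∧
    |timeDeriv u t x| ≤ C * (1 + ‖x‖) ^ (-(n + 1 : ℝ)) ∧
    ‖fderiv ℝ (fun y => u (t, y)) x‖ ≤ C * (1 + ‖x‖) ^ (-(n + 1 : ℝ)) ∧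
    ‖iteratedFDeriv ℝ 2 (fun y => u (t, y)) x‖ ≤ C * (1 + ‖x‖) ^ (-(n + 1 : ℝ))

/-!
Let `V(x) = ∫₀ᵀ (∂ₜu)² dt`. Substituting the equation for one factor `∂ₜu`, the reaction term
contributes `∫₀ᵀ P(u) ∂ₜu dt = 0`, the integral over a period of the time derivative of a periodic
function of `u`; hence `V = ∑ᵢ gᵢ` with `gᵢ = ∫₀ᵀ ∂ₜu ∂ᵢ²u dt`. By periodicity again
`∫₀ᵀ ∂ᵢ∂ₜu ∂ᵢu dt = ∫₀ᵀ ∂ₜ((∂ᵢu)²/2) dt = 0`, so `gᵢ = ∂ᵢWᵢ` with `Wᵢ = ∫₀ᵀ ∂ₜu ∂ᵢu dt`.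
The decay of `u` makes `Wᵢ` and `gᵢ` decay like `(1+|x|)^{-2(n+1)}`, so `gᵢ` integrates to zero
along every line parallel to the `i`-th axis, hence over `ℝⁿ`. Thus `V ≥ 0` is continuous with
`∫ V = 0`, so `V ≡ 0` and `∂ₜu ≡ 0`.
-/

namespace ReactionDiffusion

section Calculus

variable {E G : Type*} [NormedAddCommGroup E] [NormedSpace ℝ E]
  [NormedAddCommGroup G] [NormedSpace ℝ G]

theorem hasDerivAt_comp_timeSlice {F : ℝ × E → G} {t : ℝ} {x : E}
    (hF : DifferentiableAt ℝ F (t, x)) :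
    HasDerivAt (fun s => F (s, x)) (fderiv ℝ F (t, x) (1, 0)) t :=
  hF.hasFDerivAt.comp_hasDerivAt t ((hasDerivAt_id t).prodMk (hasDerivAt_const t x))

theorem hasDerivAt_comp_spaceLine {F : ℝ × E → G} {t s : ℝ} {x v : E}
    (hF : DifferentiableAt ℝ F (t, x + s • v)) :
    HasDerivAt (fun s => F (t, x + s • v)) (fderiv ℝ F (t, x + s • v) (0, v)) s := by
  have hline : HasDerivAt (fun s : ℝ => x + s • v) v s := by
    simpa using ((hasDerivAt_id s).smul_const v).const_add x
  exact hF.hasFDerivAt.comp_hasDerivAt s ((hasDerivAt_const s t).prodMk hline)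

theorem fderiv_comp_spaceSlice_apply {F : ℝ × E → G} {t : ℝ} {x : E}
    (hF : DifferentiableAt ℝ F (t, x)) (v : E) :
    fderiv ℝ (fun y => F (t, y)) x v = fderiv ℝ F (t, x) (0, v) := by
  have hslice : HasFDerivAt (fun y => F (t, y)) ((fderiv ℝ F (t, x)).comp
      ((0 : E →L[ℝ] ℝ).prod (ContinuousLinearMap.id ℝ E))) x :=
    hF.hasFDerivAt.comp x ((hasFDerivAt_const t x).prodMk (hasFDerivAt_id x))
  rw [hslice.fderiv]
  rfl

variable {u : ℝ × E → ℝ}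

theorem fderiv_add_period {T : ℝ} (hper : ∀ t x, u (t + T, x) = u (t, x)) (t : ℝ) (x : E) :
    fderiv ℝ u (t + T, x) = fderiv ℝ u (t, x) := by
  have hshift : (fun p : ℝ × E => u (p + (T, 0))) = u := by
    funext p
    rw [show p + (T, 0) = (p.1 + T, p.2) by simp [Prod.ext_iff]]
    exact hper p.1 p.2
  simpa [hshift] using (fderiv_comp_add_right (f := u) (x := (t, x)) (T, 0)).symm

variable (hu : ContDiff ℝ 2 u)
include hu

theorem differentiable_fderiv_apply (w : ℝ × E) :
    Differentiable ℝ (fun p => fderiv ℝ u p w) :=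
  ((hu.fderiv_right (m := 1) le_rfl).differentiable one_ne_zero).clm_apply
    (differentiable_const w)

theorem fderiv_fderiv_apply (p w w' : ℝ × E) :
    fderiv ℝ (fun q => fderiv ℝ u q w) p w' = fderiv ℝ (fderiv ℝ u) p w' w := by
  rw [fderiv_clm_apply ((hu.fderiv_right (m := 1) le_rfl).differentiable one_ne_zero p)
    (differentiableAt_const w)]
  simp

theorem fderiv_fderiv_symm (p w w' : ℝ × E) :
    fderiv ℝ (fderiv ℝ u) p w w' = fderiv ℝ (fderiv ℝ u) p w' w :=
  hu.contDiffAt.isSymmSndFDerivAt (by simp) w w'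

theorem fderiv_fderiv_spaceSlice_apply (t : ℝ) (x v w : E) :
    fderiv ℝ (fun y => fderiv ℝ (fun z => u (t, z)) y w) x v
      = fderiv ℝ (fderiv ℝ u) (t, x) (0, v) (0, w) := by
  have hslice : (fun y => fderiv ℝ (fun z => u (t, z)) y w) = fun y => fderiv ℝ u (t, y) (0, w) :=
    funext fun y => fderiv_comp_spaceSlice_apply (hu.differentiable two_ne_zero _) w
  rw [hslice, fderiv_comp_spaceSlice_apply (differentiable_fderiv_apply hu _ _) v,
    fderiv_fderiv_apply hu]

theorem iteratedFDeriv_two_spaceSlice_apply (t : ℝ) (x v : E) :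
    iteratedFDeriv ℝ 2 (fun y => u (t, y)) x ![v, v]
      = fderiv ℝ (fderiv ℝ u) (t, x) (0, v) (0, v) := by
  have hslice : ContDiff ℝ 2 (fun y => u (t, y)) := hu.comp (contDiff_const.prodMk contDiff_id)
  rw [iteratedFDeriv_two_apply, ← fderiv_fderiv_spaceSlice_apply hu,
    fderiv_clm_apply ((hslice.fderiv_right (m := 1) le_rfl).differentiable one_ne_zero x)
      (differentiableAt_const v)]
  simp

end Calculus

theorem integral_comp_mul_deriv_eq_zero_of_periodic {w w' g : ℝ → ℝ} {T : ℝ}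
    (hw : Function.Periodic w T) (hderiv : ∀ t, HasDerivAt w (w' t) t) (hw' : Continuous w')
    (hg : Continuous g) : ∫ t in (0 : ℝ)..T, g (w t) * w' t = 0 := by
  have hsubst := intervalIntegral.integral_comp_mul_deriv (a := 0) (b := T)
    (fun t _ => hderiv t) hw'.continuousOn hg
  simp only [Function.comp_def] at hsubst
  rw [hsubst, show w T = w 0 by simpa using hw 0, intervalIntegral.integral_same]

theorem hasDerivAt_intervalIntegral_of_continuous {F F' : ℝ → ℝ → ℝ} {a b s₀ : ℝ}
    (hF : ∀ s, Continuous (F s)) (hF' : Continuous (Function.uncurry F'))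
    (hderiv : ∀ s t, HasDerivAt (fun s => F s t) (F' s t) s) :
    HasDerivAt (fun s => ∫ t in a..b, F s t) (∫ t in a..b, F' s₀ t) s₀ := by
  obtain ⟨C, hC⟩ := ((isCompact_closedBall s₀ 1).prod (isCompact_uIcc (a := a) (b := b))
    ).exists_bound_of_continuousOn hF'.continuousOn
  exact (intervalIntegral.hasDerivAt_integral_of_dominated_loc_of_deriv_le (bound := fun _ => C)
    (Metric.closedBall_mem_nhds s₀ one_pos)
    (Eventually.of_forall fun s => (hF s).aestronglyMeasurable) ((hF s₀).intervalIntegrable _ _)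
    (hF'.comp (continuous_const.prodMk continuous_id)).aestronglyMeasurable
    (ae_of_all _ fun t ht s hs => hC (s, t) ⟨hs, Set.uIoc_subset_uIcc ht⟩)
    intervalIntegrable_const (ae_of_all _ fun t _ s _ => hderiv s t)).2

section PeriodFlux

variable {E : Type*} [NormedAddCommGroup E] [NormedSpace ℝ E] {u : ℝ × E → ℝ} {T : ℝ}

-- For `v = eᵢ` these are the `Wᵢ`, `gᵢ` and `V` of the sketch above.
def periodFlux (u : ℝ × E → ℝ) (T : ℝ) (v x : E) : ℝ :=
  ∫ t in (0 : ℝ)..T, fderiv ℝ u (t, x) (1, 0) * fderiv ℝ u (t, x) (0, v)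

def periodFluxDeriv (u : ℝ × E → ℝ) (T : ℝ) (v x : E) : ℝ :=
  ∫ t in (0 : ℝ)..T, fderiv ℝ u (t, x) (1, 0) * fderiv ℝ (fderiv ℝ u) (t, x) (0, v) (0, v)

def periodEnergy (u : ℝ × E → ℝ) (T : ℝ) (x : E) : ℝ :=
  ∫ t in (0 : ℝ)..T, fderiv ℝ u (t, x) (1, 0) ^ 2

variable (hu : ContDiff ℝ 2 u)
include hu

theorem continuous_fderiv_fderiv : Continuous (fderiv ℝ (fderiv ℝ u)) :=
  (hu.fderiv_right (m := 1) le_rfl).continuous_fderiv one_ne_zero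

theorem continuous_periodFluxDeriv (T : ℝ) (v : E) : Continuous (periodFluxDeriv u T v) := by
  have := hu.continuous_fderiv (by norm_num)
  have := continuous_fderiv_fderiv hu
  unfold periodFluxDeriv
  fun_prop

theorem integral_fderiv_fderiv_mul_fderiv_eq_zero (hper : ∀ t x, u (t + T, x) = u (t, x))
    (x : E) (w : ℝ × E) :
    ∫ t in (0 : ℝ)..T, fderiv ℝ (fderiv ℝ u) (t, x) w (1, 0) * fderiv ℝ u (t, x) w = 0 := by
  have := continuous_fderiv_fderiv hu
  have hderiv : ∀ t, HasDerivAt (fun s => fderiv ℝ u (s, x) w)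
      (fderiv ℝ (fderiv ℝ u) (t, x) w (1, 0)) t := fun t => by
    rw [fderiv_fderiv_symm hu, ← fderiv_fderiv_apply hu]
    exact hasDerivAt_comp_timeSlice (differentiable_fderiv_apply hu w _)
  simpa only [id, mul_comm] using integral_comp_mul_deriv_eq_zero_of_periodic (g := id)
    (fun t => by simp only [fderiv_add_period hper]) hderiv (by fun_prop) continuous_id

theorem hasDerivAt_periodFlux (hper : ∀ t x, u (t + T, x) = u (t, x)) (v x : E) (s₀ : ℝ) :
    HasDerivAt (fun s => periodFlux u T v (x + s • v))
      (periodFluxDeriv u T v (x + s₀ • v)) s₀ := by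
  have := hu.continuous_fderiv (by norm_num)
  have := continuous_fderiv_fderiv hu
  have hline : ∀ w s t, HasDerivAt (fun s => fderiv ℝ u (t, x + s • v) w)
      (fderiv ℝ (fderiv ℝ u) (t, x + s • v) (0, v) w) s := fun w s t => by
    rw [← fderiv_fderiv_apply hu]
    exact hasDerivAt_comp_spaceLine (differentiable_fderiv_apply hu w _)
  have hprod := hasDerivAt_intervalIntegral_of_continuous (a := 0) (b := T) (s₀ := s₀)
    (fun s => by fun_prop) (by simp only [Function.uncurry_def]; fun_prop)
    (fun s t => (hline (1, 0) s t).mul (hline (0, v) s t))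
  rwa [intervalIntegral.integral_add ((by fun_prop : Continuous _).intervalIntegrable _ _)
    ((by fun_prop : Continuous _).intervalIntegrable _ _),
    integral_fderiv_fderiv_mul_fderiv_eq_zero hu hper, zero_add] at hprod

theorem continuous_periodEnergy (T : ℝ) : Continuous (periodEnergy u T) := by
  have := hu.continuous_fderiv (by norm_num)
  unfold periodEnergy
  fun_prop

theorem fderiv_time_eq_zero_of_periodEnergy_eq_zero (hT : 0 < T)
    (hper : ∀ t x, u (t + T, x) = u (t, x)) (x : E) (h : periodEnergy u T x = 0) (t : ℝ) :
    fderiv ℝ u (t, x) (1, 0) = 0 := by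
  have := hu.continuous_fderiv (by norm_num)
  set φ : ℝ → ℝ := fun s => fderiv ℝ u (s, x) (1, 0)
  have hφ : Continuous φ := by fun_prop
  have hzero_on : ∀ s ∈ Set.Icc 0 T, φ s = 0 := by
    intro s hs
    by_contra hne
    have hpos := intervalIntegral.integral_lt_integral_of_continuousOn_of_le_of_exists_lt hT
      continuousOn_const (hφ.pow 2).continuousOn (fun s _ => sq_nonneg (φ s))
      ⟨s, hs, sq_pos_iff.mpr hne⟩
    simp only [intervalIntegral.integral_zero] at hpos
    exact hpos.ne' h
  have hφ_per : Function.Periodic φ T := fun s => by simp only [φ, fderiv_add_period hper]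
  obtain ⟨s, hs, hts⟩ := hφ_per.exists_mem_Ico₀ hT t
  exact hts.trans (hzero_on s (Set.Ico_subset_Icc_self hs))

end PeriodFlux

section Decay

variable {E : Type*} [NormedAddCommGroup E]

theorem one_add_norm_rpow_neg_le (x y : E) {r : ℝ} (hr : 0 ≤ r) :
    (1 + ‖y‖) ^ (-r) ≤ (1 + ‖x‖) ^ r * (1 + ‖y - x‖) ^ (-r) := by
  have hx : 0 < 1 + ‖x‖ := by positivity
  have hy : 0 < 1 + ‖y‖ := by positivity
  have hxy : 0 < 1 + ‖y - x‖ := by positivity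
  have hle : 1 + ‖y - x‖ ≤ (1 + ‖y‖) * (1 + ‖x‖) := by
    nlinarith [norm_sub_le y x, norm_nonneg x, norm_nonneg y]
  rw [Real.rpow_neg hy.le, Real.rpow_neg hxy.le, ← div_eq_mul_inv,
    le_div_iff₀ (by positivity), inv_mul_le_iff₀ (by positivity), ← Real.mul_rpow hy.le hx.le]
  exact Real.rpow_le_rpow hxy.le hle hr

variable [NormedSpace ℝ E]

theorem integral_comp_line_eq_zero_of_hasDerivAt {W g : E → ℝ} {K r : ℝ} (hr : 1 < r)
    (hg : Continuous g) (hW_le : ∀ x, |W x| ≤ K * (1 + ‖x‖) ^ (-r))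
    (hg_le : ∀ x, |g x| ≤ K * (1 + ‖x‖) ^ (-r)) {v : E} (hv : ‖v‖ = 1) (y : E)
    (hderiv : ∀ s : ℝ, HasDerivAt (fun s => W (y + s • v)) (g (y + s • v)) s) :
    ∫ s : ℝ, g (y + s • v) = 0 := by
  have hK : 0 ≤ K := nonneg_of_mul_nonneg_left ((abs_nonneg _).trans (hg_le 0)) (by positivity)
  set B : ℝ → ℝ := fun s => K * (1 + ‖y‖) ^ r * (1 + ‖s‖) ^ (-r)
  have hB : ∀ f : E → ℝ, (∀ x, |f x| ≤ K * (1 + ‖x‖) ^ (-r)) → ∀ s, ‖f (y + s • v)‖ ≤ B s := by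
    intro f hf s
    have hdist : ‖y + s • v - y‖ = ‖s‖ := by simp [norm_smul, hv]
    calc ‖f (y + s • v)‖ ≤ K * (1 + ‖y + s • v‖) ^ (-r) := hf _
      _ ≤ K * ((1 + ‖y‖) ^ r * (1 + ‖s‖) ^ (-r)) := by
        rw [← hdist]
        exact mul_le_mul_of_nonneg_left (one_add_norm_rpow_neg_le _ _ (by linarith)) hK
      _ = B s := by ring
  have hB_int : Integrable B := (integrable_one_add_norm (by simpa using hr)).const_mul _
  have hB_lim : Tendsto B (cocompact ℝ) (𝓝 0) := by
    have h := ((tendsto_rpow_neg_atTop (by linarith : 0 < r)).comp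
      (tendsto_atTop_add_const_left _ 1 (tendsto_norm_cocompact_atTop (E := ℝ)))).const_mul
        (K * (1 + ‖y‖) ^ r)
    rwa [mul_zero] at h
  have hg_int : Integrable fun s : ℝ => g (y + s • v) :=
    hB_int.mono' (by fun_prop : Continuous _).aestronglyMeasurable (ae_of_all _ (hB g hg_le))
  simpa using integral_of_hasDerivAt_of_tendsto hderiv hg_int
    (squeeze_zero_norm (hB W hW_le) (hB_lim.mono_left atBot_le_cocompact))
    (squeeze_zero_norm (hB W hW_le) (hB_lim.mono_left atTop_le_cocompact))

theorem integrable_of_abs_le_one_add_norm_rpow_neg [FiniteDimensional ℝ E] [MeasurableSpace E]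
    [BorelSpace E] {μ : Measure E} [μ.IsAddHaarMeasure] {f : E → ℝ} {K r : ℝ}
    (hf : Continuous f) (hr : (Module.finrank ℝ E : ℝ) < r)
    (hf_le : ∀ x, |f x| ≤ K * (1 + ‖x‖) ^ (-r)) : Integrable f μ :=
  ((integrable_one_add_norm hr).const_mul K).mono' hf.aestronglyMeasurable (ae_of_all _ hf_le)

end Decay

theorem integral_eq_zero_of_integral_line_eq_zero {n : ℕ} {g : Spc n → ℝ} (hg : Integrable g)
    (i : Fin n) (hline : ∀ y, ∫ s : ℝ, g (y + s • EuclideanSpace.single i (1 : ℝ)) = 0) :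
    ∫ x, g x = 0 := by
  obtain ⟨m, rfl⟩ : ∃ m, n = m + 1 := ⟨n - 1, by have := i.pos; omega⟩
  let e : ℝ × (Fin m → ℝ) ≃ᵐ Spc (m + 1) :=
    (MeasurableEquiv.piFinSuccAbove (fun _ => ℝ) i).symm.trans (MeasurableEquiv.toLp 2 _)
  have he : MeasurePreserving e (volume.prod volume) volume := by
    rw [← Measure.volume_eq_prod]
    exact (volume_preserving_piFinSuccAbove (fun _ => ℝ) i).symm.trans
      (PiLp.volume_preserving_toLp _)
  have hshift : ∀ s z, e (s, z) = e (0, z) + s • EuclideanSpace.single i (1 : ℝ) := by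
    intro s z
    ext j
    show (Fin.insertNth i s z : Fin (m + 1) → ℝ) j
      = (Fin.insertNth i (0 : ℝ) z : Fin (m + 1) → ℝ) j + s * EuclideanSpace.single i (1 : ℝ) j
    rcases eq_or_ne j i with rfl | hj
    · simp
    · obtain ⟨k, rfl⟩ := Fin.exists_succAbove_eq hj
      simp [Fin.succAbove_ne]
  have hz : ∀ z, ∫ s : ℝ, g (e (s, z)) = 0 := fun z => by
    simpa only [← hshift] using hline (e (0, z))
  rw [← he.integral_comp e.measurableEmbedding,
    integral_prod_symm (fun w => g (e w)) ((he.integrable_comp_emb e.measurableEmbedding).mpr hg)]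
  simp only [hz, integral_zero]

theorem abs_intervalIntegral_mul_le {f g : ℝ → ℝ} {T A : ℝ} (hT : 0 ≤ T)
    (hf : ∀ t ∈ Set.Icc 0 T, |f t| ≤ A) (hg : ∀ t ∈ Set.Icc 0 T, |g t| ≤ A) :
    |∫ t in (0 : ℝ)..T, f t * g t| ≤ T * A ^ 2 := by
  have hbound : ∀ t ∈ Set.uIoc 0 T, ‖f t * g t‖ ≤ A ^ 2 := by
    intro t ht
    rw [Set.uIoc_of_le hT] at ht
    have ht' := Set.Ioc_subset_Icc_self ht
    rw [Real.norm_eq_abs, abs_mul, sq]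
    exact mul_le_mul (hf t ht') (hg t ht') (abs_nonneg _) ((abs_nonneg _).trans (hf t ht'))
  simpa [abs_of_nonneg hT, mul_comm] using
    intervalIntegral.norm_integral_le_of_norm_le_const hbound

variable {n N : ℕ} {u : ℝ × Spc n → ℝ} {T : ℝ}

section

variable (hu : ContDiff ℝ 2 u)
include hu

theorem timeDeriv_eq_fderiv (t : ℝ) (x : Spc n) :
    timeDeriv u t x = fderiv ℝ u (t, x) (1, 0) :=
  (hasDerivAt_comp_timeSlice (hu.differentiable two_ne_zero _)).deriv

theorem lap_spaceSlice_eq (t : ℝ) (x : Spc n) :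
    lap (fun y => u (t, y)) x = ∑ i, fderiv ℝ (fderiv ℝ u) (t, x)
      (0, EuclideanSpace.single i 1) (0, EuclideanSpace.single i 1) :=
  Finset.sum_congr rfl fun _ _ => fderiv_fderiv_spaceSlice_apply hu t x _ _

theorem _root_.AdmissibleDecay.abs_fderiv_le (hdec : AdmissibleDecay u) (hT : 0 < T) :
    ∃ C, ∀ t ∈ Set.Icc 0 T, ∀ x : Spc n,
      |fderiv ℝ u (t, x) (1, 0)| ≤ C * (1 + ‖x‖) ^ (-(n + 1 : ℝ)) ∧
      ∀ v : Spc n, ‖v‖ = 1 →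
        |fderiv ℝ u (t, x) (0, v)| ≤ C * (1 + ‖x‖) ^ (-(n + 1 : ℝ)) ∧
        |fderiv ℝ (fderiv ℝ u) (t, x) (0, v) (0, v)| ≤ C * (1 + ‖x‖) ^ (-(n + 1 : ℝ)) := by
  obtain ⟨C, hC⟩ := hdec T hT
  refine ⟨C, fun t ht x => ?_⟩
  obtain ⟨-, hut, hDu, hD2u⟩ := hC t x (abs_le.mpr ⟨by linarith [ht.1], ht.2⟩)
  refine ⟨timeDeriv_eq_fderiv hu t x ▸ hut, fun v hv => ⟨?_, ?_⟩⟩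
  · rw [← fderiv_comp_spaceSlice_apply (hu.differentiable two_ne_zero _)]
    calc |fderiv ℝ (fun y => u (t, y)) x v| ≤ ‖fderiv ℝ (fun y => u (t, y)) x‖ * ‖v‖ :=
          (fderiv ℝ (fun y => u (t, y)) x).le_opNorm v
      _ ≤ _ := by rwa [hv, mul_one]
  · rw [← iteratedFDeriv_two_spaceSlice_apply hu]
    calc |iteratedFDeriv ℝ 2 (fun y => u (t, y)) x ![v, v]|
        ≤ ‖iteratedFDeriv ℝ 2 (fun y => u (t, y)) x‖ * ∏ j : Fin 2, ‖![v, v] j‖ :=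
          (iteratedFDeriv ℝ 2 (fun y => u (t, y)) x).le_opNorm ![v, v]
      _ ≤ _ := by simpa [Fin.prod_univ_two, hv] using hD2u

theorem _root_.AdmissibleDecay.exists_periodIntegral_bound (hdec : AdmissibleDecay u)
    (hT : 0 < T) :
    ∃ K, ∀ x : Spc n,
      |periodEnergy u T x| ≤ K * (1 + ‖x‖) ^ (-(2 * (n + 1) : ℝ)) ∧
      ∀ v : Spc n, ‖v‖ = 1 →
        |periodFlux u T v x| ≤ K * (1 + ‖x‖) ^ (-(2 * (n + 1) : ℝ)) ∧
        |periodFluxDeriv u T v x| ≤ K * (1 + ‖x‖) ^ (-(2 * (n + 1) : ℝ)) := by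
  obtain ⟨C, hC⟩ := hdec.abs_fderiv_le hu hT
  refine ⟨T * C ^ 2, fun x => ?_⟩
  have hweight : T * (C * (1 + ‖x‖) ^ (-(n + 1 : ℝ))) ^ 2
      = T * C ^ 2 * (1 + ‖x‖) ^ (-(2 * (n + 1) : ℝ)) := by
    rw [mul_pow, ← Real.rpow_mul_natCast (by positivity)]
    push_cast
    ring_nf
  rw [← hweight]
  refine ⟨?_, fun v hv => ⟨?_, ?_⟩⟩
  · simpa only [periodEnergy, sq] using abs_intervalIntegral_mul_le hT.le
      (fun t ht => (hC t ht x).1) (fun t ht => (hC t ht x).1)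
  · exact abs_intervalIntegral_mul_le hT.le (fun t ht => (hC t ht x).1)
      (fun t ht => ((hC t ht x).2 v hv).1)
  · exact abs_intervalIntegral_mul_le hT.le (fun t ht => (hC t ht x).1)
      (fun t ht => ((hC t ht x).2 v hv).2)

theorem periodEnergy_eq_sum_periodFluxDeriv {a : Fin N → Spc n → ℝ} (hsol : IsSol a u)
    (hper : ∀ t x, u (t + T, x) = u (t, x)) (x : Spc n) :
    periodEnergy u T x = ∑ i, periodFluxDeriv u T (EuclideanSpace.single i 1) x := by
  have := hu.continuous_fderiv (by norm_num)
  have := continuous_fderiv_fderiv hu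
  have := hu.continuous
  set P : ℝ → ℝ := fun y => -y ^ N + ∑ j : Fin N, a j x * y ^ (j : ℕ)
  have hpde : ∀ t, fderiv ℝ u (t, x) (1, 0) = ∑ i, fderiv ℝ (fderiv ℝ u) (t, x)
      (0, EuclideanSpace.single i 1) (0, EuclideanSpace.single i 1) + P (u (t, x)) := fun t => by
    rw [← timeDeriv_eq_fderiv hu, ← lap_spaceSlice_eq hu]
    exact hsol t x
  have hnonlin : ∫ t in (0 : ℝ)..T, P (u (t, x)) * fderiv ℝ u (t, x) (1, 0) = 0 :=
    integral_comp_mul_deriv_eq_zero_of_periodic (fun t => hper t x)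
      (fun t => hasDerivAt_comp_timeSlice (hu.differentiable two_ne_zero _)) (by fun_prop)
      (by fun_prop)
  have hsplit : ∀ t, fderiv ℝ u (t, x) (1, 0) ^ 2 = ∑ i, fderiv ℝ u (t, x) (1, 0) *
      fderiv ℝ (fderiv ℝ u) (t, x) (0, EuclideanSpace.single i 1) (0, EuclideanSpace.single i 1)
      + P (u (t, x)) * fderiv ℝ u (t, x) (1, 0) := fun t => by
    rw [sq]
    nth_rewrite 2 [hpde t]
    rw [mul_add, Finset.mul_sum, mul_comm (fderiv ℝ u (t, x) (1, 0))]
  unfold periodEnergy periodFluxDeriv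
  simp_rw [hsplit]
  rw [intervalIntegral.integral_add ((by fun_prop : Continuous _).intervalIntegrable _ _)
    ((by fun_prop : Continuous _).intervalIntegrable _ _), hnonlin, add_zero,
    intervalIntegral.integral_finsetSum
      fun i _ => (by fun_prop : Continuous _).intervalIntegrable _ _]

theorem integral_periodFluxDeriv_eq_zero (hper : ∀ t x, u (t + T, x) = u (t, x)) {K r : ℝ}
    (hr : (n : ℝ) < r) (i : Fin n)
    (hW : ∀ x, |periodFlux u T (EuclideanSpace.single i 1) x| ≤ K * (1 + ‖x‖) ^ (-r))
    (hg : ∀ x, |periodFluxDeriv u T (EuclideanSpace.single i 1) x| ≤ K * (1 + ‖x‖) ^ (-r)) :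
    ∫ x, periodFluxDeriv u T (EuclideanSpace.single i 1) x = 0 :=
  integral_eq_zero_of_integral_line_eq_zero
    (integrable_of_abs_le_one_add_norm_rpow_neg (continuous_periodFluxDeriv hu T _)
      (by simpa using hr) hg) i
    fun y => integral_comp_line_eq_zero_of_hasDerivAt
      ((Nat.one_le_cast.mpr i.pos).trans_lt hr) (continuous_periodFluxDeriv hu T _) hW hg
      (by simp) y (hasDerivAt_periodFlux hu hper _ y)

end

end ReactionDiffusion

open ReactionDiffusion in
theorem no_nonconstant_periodic_solutions_general
    {n N : ℕ}
    (a : Fin N → Spc n → ℝ)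
    (u : ℝ × Spc n → ℝ) (hu : ContDiff ℝ (⊤ : ℕ∞) u) (hdec : AdmissibleDecay u)
    (hsol : IsSol a u)
    (T₀ : ℝ) (hT₀ : 0 < T₀)
    (hper : ∀ (t : ℝ) (x : Spc n), u (t + T₀, x) = u (t, x)) :
    ∀ (t : ℝ) (x : Spc n), timeDeriv u t x = 0 := by
  have hu2 : ContDiff ℝ 2 u := hu.of_le (WithTop.coe_le_coe.mpr le_top)
  obtain ⟨K, hbound⟩ := hdec.exists_periodIntegral_bound hu2 hT₀
  have hr : (n : ℝ) < 2 * (n + 1) := by linarith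
  have hr' : (Module.finrank ℝ (Spc n) : ℝ) < 2 * (n + 1) := by simpa using hr
  have hunit : ∀ i : Fin n, ‖EuclideanSpace.single i (1 : ℝ)‖ = 1 := by simp
  have hintegral : ∫ x, periodEnergy u T₀ x = 0 := by
    simp_rw [periodEnergy_eq_sum_periodFluxDeriv hu2 hsol hper]
    rw [integral_finsetSum _ fun i _ => integrable_of_abs_le_one_add_norm_rpow_neg
      (continuous_periodFluxDeriv hu2 T₀ _) hr' fun x => ((hbound x).2 _ (hunit i)).2]
    exact Finset.sum_eq_zero fun i _ => integral_periodFluxDeriv_eq_zero hu2 hper hr i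
      (fun x => ((hbound x).2 _ (hunit i)).1) (fun x => ((hbound x).2 _ (hunit i)).2)
  have henergy_nonneg : ∀ x, 0 ≤ periodEnergy u T₀ x := fun x =>
    intervalIntegral.integral_nonneg hT₀.le fun t _ => sq_nonneg _
  have henergy : periodEnergy u T₀ = 0 :=
    (continuous_periodEnergy hu2 T₀).ae_eq_iff_eq volume continuous_const |>.mp <|
      (integral_eq_zero_iff_of_nonneg henergy_nonneg (integrable_of_abs_le_one_add_norm_rpow_neg
        (continuous_periodEnergy hu2 T₀) hr' fun x => (hbound x).1)).mp hintegral
  intro t x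
  rw [timeDeriv_eq_fderiv hu2]
  exact fderiv_time_eq_zero_of_periodEnergy_eq_zero hu2 hT₀ hper x (congrFun henergy x) t

/-- A smooth, time-periodic solution of the PDE with admissible decay is
constant in time: there are no nonconstant time-periodic solutions. -/
theorem no_nonconstant_periodic_solutions
    {n N : ℕ} (hn : 1 ≤ n) (hN : 2 ≤ N)
    (a : Fin N → Spc n → ℝ) (ha : GoodCoeffs a)
    (u : ℝ × Spc n → ℝ) (hu : ContDiff ℝ (⊤ : ℕ∞) u) (hdec : AdmissibleDecay u)
    (hsol : IsSol a u)
    (T₀ : ℝ) (hT₀ : 0 < T₀)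
    (hper : ∀ (t : ℝ) (x : Spc n), u (t + T₀, x) = u (t, x)) :
    ∀ (t : ℝ) (x : Spc n), timeDeriv u t x = 0 :=
  no_nonconstant_periodic_solutions_general a u hu hdec hsol T₀ hT₀ hper
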